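/- Fix integers 0 = s_1 < s_2 < ... < s_k, set S = {s_1,...,s_k} and s̄ = s_k, and let n ≥ 2s̄. If T ⊆ E_L(n+1) is a legal cover of L_{n+1}, then T \ New(n) is a legal cover of L_n. -/

import Mathlib

/-- The number of edges of `T` ending at vertex `v`. -/
def indeg (T : Finset (ℕ × ℕ)) (v : ℕ) : ℕ := (T.filter fun e => e.2 = v).card

/-- The number of edges of `T` starting at vertex `v`. -/
def outdeg (T : Finset (ℕ × ℕ)) (v : ℕ) : ℕ := (T.filter fun e => e.1 = v).card

/-- Edge set of the directed circulant graph `C_n` with jump set `S`: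
edges `(i,j)` with `i, j ∈ {0,…,n−1}` and `(j − i) mod n ∈ S`. -/
def ECirc (S : Finset ℕ) (n : ℕ) : Finset (ℕ × ℕ) :=
  (Finset.range n ×ˢ Finset.range n).filter fun e => (e.2 + n - e.1) % n ∈ S

/-- Edge set of the lattice graph `L_n` with jump set `S`:
edges `(i,j)` with `i, j ∈ {0,…,n−1}` and `j − i ∈ S`. -/
def ELat (S : Finset ℕ) (n : ℕ) : Finset (ℕ × ℕ) :=
  (Finset.range n ×ˢ Finset.range n).filter fun e => e.1 ≤ e.2 ∧ e.2 - e.1 ∈ S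

/-- `Hook(n) = E_C(n) \ E_L(n)`. -/
def Hook (S : Finset ℕ) (n : ℕ) : Finset (ℕ × ℕ) := ECirc S n \ ELat S n

/-- `New(n) = E_L(n+1) \ E_L(n)`. -/
def NewE (S : Finset ℕ) (n : ℕ) : Finset (ℕ × ℕ) := ELat S (n + 1) \ ELat S n

/-- `T` is a cycle cover of `C_n`: `T ⊆ E_C(n)` and every vertex has in- and out-degree 1. -/
def CycleCover (S : Finset ℕ) (n : ℕ) (T : Finset (ℕ × ℕ)) : Prop :=
  T ⊆ ECirc S n ∧ ∀ v < n, indeg T v = 1 ∧ outdeg T v = 1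

/-- `T` is a legal cover of `L_n` (with `L(n) = {0,…,s̄−1}`, `R(n) = {n−s̄,…,n−1}`):
all in/out-degrees are at most 1, vertices outside `L(n)` have in-degree 1, and
vertices outside `R(n)` have out-degree 1. -/
def LegalCover (S : Finset ℕ) (sbar n : ℕ) (T : Finset (ℕ × ℕ)) : Prop :=
  T ⊆ ELat S n ∧ (∀ v < n, indeg T v ≤ 1 ∧ outdeg T v ≤ 1) ∧
    (∀ v < n, sbar ≤ v → indeg T v = 1) ∧
    (∀ v < n, v < n - sbar → outdeg T v = 1)

/-- The classification `C(T) = (L^T, R^T)` of a legal cover of `L_n`, as a pair of binary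
`s̄`-tuples: `L^T(i)` records whether `indeg_T(i) = 1` and `R^T(i)` whether
`outdeg_T(n−1−i) = 1`. -/
def classif (sbar n : ℕ) (T : Finset (ℕ × ℕ)) :
    (Fin sbar → Bool) × (Fin sbar → Bool) :=
  (fun i => decide (indeg T i.val = 1), fun i => decide (outdeg T (n - 1 - i.val) = 1))

/-! Since `T ⊆ E_L(n+1)`, removing `New(n)` only removes the edges of `T` ending at `n`. An edge
ending at `v < n`, or starting at `v < n - s̄` (edges have length at most `s̄`), never ends at `n`,
so these in- and out-degrees are the same in `T` and in `T \ New(n)`. -/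

theorem mem_ELat {S : Finset ℕ} {n : ℕ} {e : ℕ × ℕ} :
    e ∈ ELat S n ↔ (e.1 < n ∧ e.2 < n) ∧ e.1 ≤ e.2 ∧ e.2 - e.1 ∈ S := by
  simp [ELat]

theorem sdiff_NewE_eq_inter_ELat {S : Finset ℕ} {n : ℕ} {T : Finset (ℕ × ℕ)}
    (hT : T ⊆ ELat S (n + 1)) : T \ NewE S n = T ∩ ELat S n := by
  rw [NewE, sdiff_sdiff_right', sdiff_eq_bot_iff.mpr hT, bot_sup_eq]
  rfl

theorem indeg_mono {T T' : Finset (ℕ × ℕ)} (h : T' ⊆ T) (v : ℕ) : indeg T' v ≤ indeg T v :=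
  Finset.card_le_card (Finset.filter_subset_filter _ h)

theorem outdeg_mono {T T' : Finset (ℕ × ℕ)} (h : T' ⊆ T) (v : ℕ) : outdeg T' v ≤ outdeg T v :=
  Finset.card_le_card (Finset.filter_subset_filter _ h)

theorem indeg_inter_of_forall {T E : Finset (ℕ × ℕ)} {v : ℕ} (h : ∀ e ∈ T, e.2 = v → e ∈ E) :
    indeg (T ∩ E) v = indeg T v := by
  unfold indeg
  congr 1
  ext e
  simp only [Finset.mem_filter, Finset.mem_inter]
  exact ⟨fun he => ⟨he.1.1, he.2⟩, fun he => ⟨⟨he.1, h e he.1 he.2⟩, he.2⟩⟩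

theorem outdeg_inter_of_forall {T E : Finset (ℕ × ℕ)} {v : ℕ} (h : ∀ e ∈ T, e.1 = v → e ∈ E) :
    outdeg (T ∩ E) v = outdeg T v := by
  unfold outdeg
  congr 1
  ext e
  simp only [Finset.mem_filter, Finset.mem_inter]
  exact ⟨fun he => ⟨he.1.1, he.2⟩, fun he => ⟨⟨he.1, h e he.1 he.2⟩, he.2⟩⟩

theorem indeg_inter_ELat {S : Finset ℕ} {m n v : ℕ} {T : Finset (ℕ × ℕ)}
    (hT : T ⊆ ELat S m) (hv : v < n) : indeg (T ∩ ELat S n) v = indeg T v := by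
  refine indeg_inter_of_forall fun e he hev => ?_
  obtain ⟨-, hle, hS⟩ := mem_ELat.mp (hT he)
  exact mem_ELat.mpr ⟨⟨by omega, by omega⟩, hle, hS⟩

theorem outdeg_inter_ELat {S : Finset ℕ} {sbar m n v : ℕ} {T : Finset (ℕ × ℕ)}
    (hT : T ⊆ ELat S m) (hS : ∀ s ∈ S, s ≤ sbar) (hv : v + sbar < n) :
    outdeg (T ∩ ELat S n) v = outdeg T v := by
  refine outdeg_inter_of_forall fun e he hev => ?_
  obtain ⟨-, hle, hjump⟩ := mem_ELat.mp (hT he)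
  have := hS _ hjump
  exact mem_ELat.mpr ⟨⟨by omega, by omega⟩, hle, hjump⟩

theorem legalCover_sdiff_new_legal_general (S : Finset ℕ) (h0 : 0 ∈ S) (sbar : ℕ)
    (hsbar : sbar = S.max' ⟨0, h0⟩) (n : ℕ)
    (T : Finset (ℕ × ℕ)) (hT : LegalCover S sbar (n + 1) T) :
    LegalCover S sbar n (T \ NewE S n) := by
  obtain ⟨hsub, hdeg, hin, hout⟩ := hT
  have hS : ∀ s ∈ S, s ≤ sbar := fun s hs => hsbar ▸ S.le_max' s hs
  rw [sdiff_NewE_eq_inter_ELat hsub]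
  refine ⟨Finset.inter_subset_right, fun v hv => ?_, fun v hv hsv => ?_, fun v hv hvn => ?_⟩
  · exact ⟨(indeg_mono Finset.inter_subset_left v).trans (hdeg v (by omega)).1,
      (outdeg_mono Finset.inter_subset_left v).trans (hdeg v (by omega)).2⟩
  · rw [indeg_inter_ELat hsub hv]
    exact hin v (by omega) hsv
  · rw [outdeg_inter_ELat hsub hS (by omega)]
    exact hout v (by omega) (by omega)

/-- If `T` is a legal cover of the lattice graph `L_{n+1}` (jump set `S` with
`0 = s_1 < ⋯ < s_k`, `s̄ = s_k`, `n ≥ 2s̄`), then `T \ New(n)` is a legal cover of `L_n`. -/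
theorem legalCover_sdiff_new_legal (S : Finset ℕ) (h0 : 0 ∈ S) (sbar : ℕ)
    (hsbar : sbar = S.max' ⟨0, h0⟩) (n : ℕ) (hn : 2 * sbar ≤ n)
    (T : Finset (ℕ × ℕ)) (hT : LegalCover S sbar (n + 1) T) :
    LegalCover S sbar n (T \ NewE S n) :=
  legalCover_sdiff_new_legal_general S h0 sbar hsbar n T hT
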